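/- arXiv:2012.02617 — 3 statements merged into one kernel-verified Lean document; each statement's English description precedes it below -/
import Mathlib

section
/- Let m, n be positive integers and let r = (r_1, …, r_m) be integers with 0 ≤ r_i ≤ n for all i, with conjugate tuple d = (d_1, …, d_n) defined by d_j = |{i ∈ [m] : r_i ≥ j}|. Let c = (c_1, …, c_n) be a nonincreasing tuple of nonnegative integers. Then there exists a matrix A ∈ {0,1}^{m×n} with row sums r_i(A) = r_i for all i ∈ [m] and column sums c_j(A) = c_j for all j ∈ [n] if and only if c is majorized by d, i.e., ∑_{j=1}^k c_j ≤ ∑_{j=1}^k d_j for every k ∈ [n] and ∑_{j=1}^n c_j = ∑_{j=1}^n d_j. -/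
/-!
Necessity: in any realization, row `i` has at most `min (r i) k` ones among the first `k`
columns, and `∑ i, min (r i) k` is exactly the `k`-th prefix sum of `d`, the column sums of the
left-justified (Ferrers) matrix of `r`.

Sufficiency: the Ferrers matrix realizes `d`, and if column `j` has a larger sum than column `l`
then some row has a `1` in `j` and a `0` in `l`; swapping the two entries realizes `d` with one
unit moved from `j` to `l`. When `c ≠ d`, let `l` be the first column with `d l < c l`; the
prefix inequality at `l + 1` gives some `j < l` with `c j < d j`, so `d l < c l ≤ c j < d j`,
and moving a unit from `j` to `l` preserves the prefix inequalities while bringing `d` closer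
to `c`. Iterating reaches `c`.
-/

open Finset

section Realizable

variable {α β : Type*} [Fintype α] [Fintype β]

def ZeroOneRealizable (r : α → ℕ) (c : β → ℕ) : Prop :=
  ∃ A : α → β → ℕ, (∀ i j, A i j = 0 ∨ A i j = 1) ∧
    (∀ i, ∑ j, A i j = r i) ∧ (∀ j, ∑ i, A i j = c j)

lemma ZeroOneRealizable.sum_eq {r : α → ℕ} {c : β → ℕ} (h : ZeroOneRealizable r c) :
    ∑ j, c j = ∑ i, r i := by
  obtain ⟨A, -, hrow, hcol⟩ := h
  simp only [← hrow, ← hcol]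
  exact sum_comm

lemma ZeroOneRealizable.exists_transfer [DecidableEq α] [DecidableEq β] {r : α → ℕ}
    {c : β → ℕ} (h : ZeroOneRealizable r c) {j l : β} (hlj : c l < c j) :
    ∃ c' : β → ℕ, c' + Pi.single j 1 = c + Pi.single l 1 ∧ ZeroOneRealizable r c' := by
  obtain ⟨A, hA01, hrow, hcol⟩ := h
  obtain ⟨i, -, hi⟩ : ∃ i ∈ univ, A i l < A i j :=
    exists_lt_of_sum_lt (by rwa [hcol, hcol])
  have hAil : A i l = 0 := by rcases hA01 i l with h | h <;> rcases hA01 i j with h' | h' <;> omega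
  have hAij : A i j = 1 := by rcases hA01 i j with h | h <;> omega
  have hjl : j ≠ l := by rintro rfl; omega
  set A' := Function.update A i (A i ∘ Equiv.swap j l)
  have hA' : ∀ i' ≠ i, A' i' = A i' := fun i' hi' => Function.update_of_ne hi' _ _
  refine ⟨fun k => ∑ i', A' i' k, ?_, A', fun i' k => ?_, fun i' => ?_, fun _ => rfl⟩
  · ext k
    have hrest : ∑ i' ∈ univ.erase i, A' i' k = ∑ i' ∈ univ.erase i, A i' k :=
      sum_congr rfl fun i' hi' => by rw [hA' i' (ne_of_mem_erase hi')]
    simp only [Pi.add_apply, ← hcol, ← add_sum_erase _ _ (mem_univ i), hrest, A',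
      Function.update_self, Function.comp_apply]
    rcases eq_or_ne k j with rfl | hkj
    · simp only [Equiv.swap_apply_left, hAil, hAij, Pi.single_eq_same, ne_eq, hjl,
        not_false_eq_true, Pi.single_eq_of_ne]
      omega
    rcases eq_or_ne k l with rfl | hkl
    · simp only [Equiv.swap_apply_right, hAil, hAij, Pi.single_eq_same, ne_eq, hkj,
        not_false_eq_true, Pi.single_eq_of_ne]
      omega
    · simp [Equiv.swap_apply_of_ne_of_ne hkj hkl, hkj, hkl]
  · by_cases hi' : i' = i
    · subst hi'; simpa [A'] using hA01 i' _
    · rw [hA' i' hi']; exact hA01 i' k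
  · by_cases hi' : i' = i
    · subst hi'; simpa [A', ← hrow i'] using Equiv.sum_comp (Equiv.swap j l) (A i')
    · rw [hA' i' hi']; exact hrow i'

end Realizable

lemma sum_add_ite_mem_eq {ι M : Type*} [DecidableEq ι] [AddCommMonoid M] {f g : ι → M}
    {j l : ι} {x : M} (h : f + Pi.single j x = g + Pi.single l x) (s : Finset ι) :
    ∑ i ∈ s, f i + (if j ∈ s then x else 0) =
      ∑ i ∈ s, g i + (if l ∈ s then x else 0) := by
  simpa [sum_add_distrib, sum_pi_single'] using congrArg (fun F => ∑ i ∈ s, F i) h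

section Majorization

variable {n : ℕ}

def prefixSum (f : Fin n → ℕ) (k : ℕ) : ℕ :=
  ∑ j ∈ univ.filter (fun j : Fin n => j.1 < k), f j

lemma prefixSum_of_le (f : Fin n → ℕ) {k : ℕ} (hk : n ≤ k) :
    prefixSum f k = ∑ j, f j := by
  rw [prefixSum, filter_true_of_mem fun j _ => by omega]

lemma prefixSum_succ (f : Fin n → ℕ) (i : Fin n) :
    prefixSum f (i.1 + 1) = prefixSum f i.1 + f i := by
  have hi : i ∈ univ.filter (fun j : Fin n => j.1 < i.1 + 1) := by simp
  rw [prefixSum, ← add_sum_erase _ _ hi, add_comm, prefixSum]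
  congr 2
  ext j
  simp only [mem_erase, mem_filter, mem_univ, true_and, ne_eq, ← Fin.val_inj]
  omega

/-- Unlike majorization proper, no sorting is involved: the tuples `d` reached by transfers in the
proof of sufficiency are not sorted. -/
def IsMajorizedBy (c d : Fin n → ℕ) : Prop :=
  (∀ k, prefixSum c k ≤ prefixSum d k) ∧ ∑ j, c j = ∑ j, d j

lemma isMajorizedBy_iff {c d : Fin n → ℕ} :
    IsMajorizedBy c d ↔
      (∀ k, 1 ≤ k → k ≤ n → prefixSum c k ≤ prefixSum d k) ∧
        ∑ j, c j = ∑ j, d j := by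
  refine ⟨fun h => ⟨fun k _ _ => h.1 k, h.2⟩,
    fun ⟨hpre, htot⟩ => ⟨fun k => ?_, htot⟩⟩
  rcases Nat.eq_zero_or_pos k with rfl | hk
  · simp [prefixSum]
  rcases le_or_gt k n with hkn | hnk
  · exact hpre k hk hkn
  · rw [prefixSum_of_le c hnk.le, prefixSum_of_le d hnk.le, htot]

lemma exists_first_lt_of_sum_eq {c d : Fin n → ℕ} (htot : ∑ j, c j = ∑ j, d j)
    (hne : c ≠ d) :
    ∃ l, d l < c l ∧ ∀ i < l, c i ≤ d i := by
  have hne' : (univ.filter fun i => d i < c i).Nonempty := by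
    by_contra! h0
    refine hne (funext fun i => ?_)
    have hle : ∀ i ∈ univ, c i ≤ d i := fun i _ => by
      simpa using filter_eq_empty_iff.1 h0 (mem_univ i)
    exact (sum_eq_sum_iff_of_le hle).1 htot i (mem_univ i)
  obtain ⟨l, hl, hmin⟩ := exists_min_image _ id hne'
  refine ⟨l, (mem_filter.1 hl).2, fun i hi => not_lt.1 fun h => ?_⟩
  exact (hmin i (by simpa using h)).not_gt hi

lemma IsMajorizedBy.exists_transfer {c d : Fin n → ℕ} (hc : Antitone c) (h : IsMajorizedBy c d)
    (hne : c ≠ d) :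
    ∃ j l, d l < d j ∧ ∀ d' : Fin n → ℕ, d' + Pi.single j 1 = d + Pi.single l 1 →
      IsMajorizedBy c d' ∧ ∑ i, (d' i - c i) < ∑ i, (d i - c i) := by
  obtain ⟨l, hl, hle⟩ := exists_first_lt_of_sum_eq h.2 hne
  obtain ⟨j, hj, hcj⟩ : ∃ j ∈ univ.filter (fun i : Fin n => i.1 < l.1), c j < d j := by
    apply exists_lt_of_sum_lt
    have := h.1 (l.1 + 1)
    rw [prefixSum_succ, prefixSum_succ] at this
    exact (show prefixSum c l.1 < prefixSum d l.1 by omega)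
  have hjl : j < l := by simpa using hj
  have hclj : c l ≤ c j := hc hjl.le
  refine ⟨j, l, by omega, fun d' hd' => ⟨⟨fun k => ?_, ?_⟩, ?_⟩⟩
  · have hshift := sum_add_ite_mem_eq hd' (univ.filter fun i : Fin n => i.1 < k)
    have hmaj := h.1 k
    simp only [mem_filter, mem_univ, true_and] at hshift
    by_cases hjk : j.1 < k ∧ k ≤ l.1
    · have hlt : prefixSum c k < prefixSum d k :=
        sum_lt_sum (fun i hi => hle i (by simp only [mem_filter, mem_univ, true_and] at hi; omega))
          ⟨j, by simpa using hjk.1, hcj⟩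
      simp only [prefixSum] at hlt hmaj ⊢
      split_ifs at hshift <;> omega
    · simp only [prefixSum] at hmaj ⊢
      split_ifs at hshift <;> omega
  · have htot := sum_add_ite_mem_eq hd' univ
    simp only [mem_univ, if_true] at htot
    have := h.2
    omega
  · have hd'j : d' j + 1 = d j := by simpa [Pi.single_apply, hjl.ne'] using congrFun hd' j
    have hd'l : d' l = d l + 1 := by simpa [Pi.single_apply, hjl.ne'] using congrFun hd' l
    apply sum_lt_sum (fun i _ => ?_) ⟨j, mem_univ j, by omega⟩
    rcases eq_or_ne i j with rfl | hij; · omega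
    rcases eq_or_ne i l with rfl | hil; · omega
    have : d' i = d i := by simpa [Pi.single_apply, hij, hil] using congrFun hd' i
    omega

end Majorization

section GaleRyser

variable {α : Type*} [Fintype α] {n : ℕ}

theorem ZeroOneRealizable.of_isMajorizedBy [DecidableEq α] {r : α → ℕ} {c d : Fin n → ℕ}
    (hc : Antitone c) (h : IsMajorizedBy c d) (hd : ZeroOneRealizable r d) :
    ZeroOneRealizable r c := by
  induction hN : ∑ i, (d i - c i) using Nat.strong_induction_on generalizing d with
  | _ N ih =>
  by_cases hcd : c = d
  · exact hcd ▸ hd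
  obtain ⟨j, l, hlj, hstep⟩ := h.exists_transfer hc hcd
  obtain ⟨d', hd', hrd'⟩ := hd.exists_transfer hlj
  obtain ⟨h', hlt⟩ := hstep d' hd'
  exact ih _ (hN ▸ hlt) h' hrd' rfl

lemma zeroOneRealizable_conjugate {r : α → ℕ} (hr : ∀ i, r i ≤ n) :
    ZeroOneRealizable r (fun j : Fin n => #{i | j.1 < r i}) :=
  ⟨fun i j => if j.1 < r i then 1 else 0, fun i j => by by_cases h : j.1 < r i <;> simp [h],
    fun i => by simp [Fin.card_filter_val_lt, hr i], fun j => by simp⟩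

lemma prefixSum_le_of_forall_le_one {a : Fin n → ℕ} (ha : ∀ j, a j ≤ 1) (k : ℕ) :
    prefixSum a k ≤ prefixSum (fun j : Fin n => if j.1 < ∑ j, a j then 1 else 0) k := by
  have hcard : ∑ j, a j ≤ n := by simpa using sum_le_card_nsmul univ a 1 fun j _ => ha j
  have hk : prefixSum a k ≤ min n k := by
    simpa [prefixSum, Fin.card_filter_val_lt] using
      sum_le_card_nsmul (univ.filter fun j : Fin n => j.1 < k) a 1 fun j _ => ha j
  have hsum : prefixSum a k ≤ ∑ j, a j := sum_le_sum_of_subset (filter_subset _ _)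
  have hrhs : prefixSum (fun j : Fin n => if j.1 < ∑ j, a j then 1 else 0) k =
      min n (min k (∑ j, a j)) := by
    simp only [prefixSum, sum_boole, filter_filter, Nat.cast_id, ← Nat.lt_min]
    exact Fin.card_filter_val_lt
  omega

lemma ZeroOneRealizable.isMajorizedBy_conjugate {r : α → ℕ} {c : Fin n → ℕ}
    (hr : ∀ i, r i ≤ n) (h : ZeroOneRealizable r c) :
    IsMajorizedBy c (fun j => #{i | j.1 < r i}) := by
  refine ⟨fun k => ?_, by rw [h.sum_eq, (zeroOneRealizable_conjugate hr).sum_eq]⟩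
  obtain ⟨A, hA01, hrow, hcol⟩ := h
  calc prefixSum c k = ∑ i, prefixSum (A i) k := by
        simp only [prefixSum, ← hcol]; exact sum_comm
    _ ≤ ∑ i, prefixSum (fun j : Fin n => if j.1 < r i then 1 else 0) k := by
      refine sum_le_sum fun i _ => ?_
      rw [← hrow i]
      exact prefixSum_le_of_forall_le_one (fun j => by rcases hA01 i j with h | h <;> omega) k
    _ = prefixSum (fun j => #{i | j.1 < r i}) k := by
      simp only [prefixSum, card_filter]
      exact sum_comm

end GaleRyser

theorem gale_ryser_general (m n : ℕ)
    (r : Fin m → ℕ) (hr : ∀ i, r i ≤ n)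
    (d : Fin n → ℕ)
    (hd : ∀ j : Fin n, d j = (univ.filter (fun i : Fin m => j.1 + 1 ≤ r i)).card)
    (c : Fin n → ℕ) (hc : Antitone c) :
    (∃ A : Fin m → Fin n → ℕ, (∀ i j, A i j = 0 ∨ A i j = 1) ∧
        (∀ i, ∑ j, A i j = r i) ∧ (∀ j, ∑ i, A i j = c j)) ↔
      ((∀ k : ℕ, 1 ≤ k → k ≤ n →
          ∑ j ∈ univ.filter (fun j : Fin n => j.1 < k), c j ≤
            ∑ j ∈ univ.filter (fun j : Fin n => j.1 < k), d j) ∧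
        ∑ j, c j = ∑ j, d j) := by
  obtain rfl : d = fun j => #{i | j.1 < r i} := funext hd
  refine Iff.trans ?_ isMajorizedBy_iff
  exact ⟨ZeroOneRealizable.isMajorizedBy_conjugate hr,
    (zeroOneRealizable_conjugate hr).of_isMajorizedBy hc⟩

/-- **Gale–Ryser theorem.** A (0,1)-matrix with row sum tuple `r` and nonincreasing
column sum tuple `c` exists iff `c` is majorized by the conjugate tuple `d` of `r`. -/
theorem gale_ryser (m n : ℕ) (hm : 0 < m) (hn : 0 < n)
    (r : Fin m → ℕ) (hr : ∀ i, r i ≤ n)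
    (d : Fin n → ℕ)
    (hd : ∀ j : Fin n, d j = (univ.filter (fun i : Fin m => j.1 + 1 ≤ r i)).card)
    (c : Fin n → ℕ) (hc : Antitone c) :
    (∃ A : Fin m → Fin n → ℕ, (∀ i j, A i j = 0 ∨ A i j = 1) ∧
        (∀ i, ∑ j, A i j = r i) ∧ (∀ j, ∑ i, A i j = c j)) ↔
      ((∀ k : ℕ, 1 ≤ k → k ≤ n →
          ∑ j ∈ univ.filter (fun j : Fin n => j.1 < k), c j ≤
            ∑ j ∈ univ.filter (fun j : Fin n => j.1 < k), d j) ∧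
        ∑ j, c j = ∑ j, d j) :=
  gale_ryser_general m n r hr d hd c hc
end

section
/- Let m, n be positive integers, let r = (r_1, …, r_m) be integers with 0 ≤ r_i ≤ n for all i, let d = (d_1, …, d_n) be the conjugate tuple of r, and let f : {0,1,…,m} → ℤ be any function. Then the minimum of ∑_{j=1}^n f(c_j(A)) over all matrices A ∈ {0,1}^{m×n} with row sums r_i(A) = r_i for all i equals the minimum of ∑_{j=1}^n f(c_j) over all nonincreasing tuples c = (c_1, …, c_n) of nonnegative integers that are majorized by d; in particular, both feasible sets are nonempty and both minima are attained. -/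
/-!
Call `c` *realizable* if it is the column-sum vector of a `(0,1)`-matrix with row sums `r`.
Both feasible sets in the theorem then consist of the values `∑ⱼ f (cⱼ)` for nonincreasing
realizable `c`, since columns can be permuted freely; so it suffices to show the Gale–Ryser
theorem: a nonincreasing `c` is realizable iff it is majorized by the conjugate `d` of `r`.

Necessity: `k` columns meet row `i` in at most `min k rᵢ` ones, and `∑ᵢ min k rᵢ` is the
`k`-th prefix sum of `d`. Sufficiency: `d` itself is realized by the staircase matrix. If
`c ≠ d`, moving one unit of `c` from a later coordinate `k` to an earlier one `j` gives a
nonincreasing `c'` that is still majorized by `d` and has smaller moment `∑ₗ l c'ₗ`; by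
induction `c'` is realized by some matrix, and since `c'ⱼ > c'ₖ` some row has a one in column
`j` and a zero in column `k`; swapping these two entries realizes `c`.
-/

open Finset

namespace GaleRyser

section MovesUnit

variable {ι : Type*} [DecidableEq ι]

/-- `c'` is obtained from `c` by moving one unit from coordinate `a` to coordinate `b`. -/
def MovesUnit (c c' : ι → ℕ) (a b : ι) : Prop :=
  ∀ l, c' l + (if l = a then 1 else 0) = c l + (if l = b then 1 else 0)

variable {c c' : ι → ℕ} {a b : ι}

theorem MovesUnit.symm (h : MovesUnit c c' a b) : MovesUnit c' c b a :=
  fun l => (h l).symm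

theorem MovesUnit.sum_mul_add (h : MovesUnit c c' a b) (w : ι → ℕ) (s : Finset ι) :
    ∑ l ∈ s, w l * c' l + (if a ∈ s then w a else 0) =
      ∑ l ∈ s, w l * c l + (if b ∈ s then w b else 0) := by
  have := sum_congr rfl fun l (_ : l ∈ s) => congrArg (w l * ·) (h l)
  simpa [mul_add, sum_add_distrib, sum_ite_eq'] using this

theorem MovesUnit.antitone [LinearOrder ι] (h : MovesUnit c c' b a) (hc : Antitone c)
    (hab : a < b) (ha : ∀ x < a, c a < c x) (hb : ∀ y, b < y → c y < c b) : Antitone c' := by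
  intro x y hxy
  rcases hxy.eq_or_lt with rfl | hlt
  · rfl
  have hx := h x
  have hy := h y
  have := hc hxy
  by_cases hxb : x = b
  · subst hxb
    have := hb y hlt
    rw [if_pos rfl, if_neg hab.ne'] at hx
    rw [if_neg hlt.ne', if_neg (hab.trans hlt).ne'] at hy
    omega
  by_cases hya : y = a
  · subst hya
    have := ha x hlt
    rw [if_neg hxb, if_neg hlt.ne] at hx
    rw [if_neg hab.ne, if_pos rfl] at hy
    omega
  split_ifs at hx hy <;> omega

end MovesUnit

section Realizable

variable {ι κ : Type*} [Fintype ι] [Fintype κ] {r : ι → ℕ} {c c' : κ → ℕ}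

def Realizable (r : ι → ℕ) (c : κ → ℕ) : Prop :=
  ∃ A : ι → κ → ℕ, (∀ i j, A i j = 0 ∨ A i j = 1) ∧ (∀ i, ∑ j, A i j = r i) ∧
    ∀ j, ∑ i, A i j = c j

theorem Realizable.comp_equiv (h : Realizable r c) (σ : κ ≃ κ) : Realizable r (c ∘ σ) := by
  obtain ⟨A, h01, hrow, hcol⟩ := h
  exact ⟨fun i j => A i (σ j), fun i j => h01 i (σ j),
    fun i => (Equiv.sum_comp σ (A i)).trans (hrow i), fun j => hcol (σ j)⟩

theorem Realizable.of_movesUnit [DecidableEq κ] {a b : κ} (h : Realizable r c)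
    (hab : c b < c a) (hmove : MovesUnit c c' a b) : Realizable r c' := by
  classical
  obtain ⟨A, h01, hrow, hcol⟩ := h
  obtain ⟨i₀, -, hi₀⟩ : ∃ i₀ ∈ univ, A i₀ b < A i₀ a :=
    exists_lt_of_sum_lt (by simpa only [hcol] using hab)
  have hia : A i₀ a = 1 := by have := h01 i₀ a; omega
  have hib : A i₀ b = 0 := by omega
  let B : ι → κ → ℕ := fun i l => if i = i₀ then A i₀ (Equiv.swap a b l) else A i l
  refine ⟨B, fun i l => ?_, fun i => ?_, fun l => ?_⟩
  · by_cases hi : i = i₀ <;> simp only [B, hi, if_true, if_false] <;> apply h01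
  · by_cases hi : i = i₀
    · simp only [B, hi, if_true]
      exact (Equiv.sum_comp (Equiv.swap a b) (A i₀)).trans (hrow i₀)
    · simp only [B, hi, if_false]
      exact hrow i
  · have hrest : ∑ i ∈ {i₀}ᶜ, B i l = ∑ i ∈ {i₀}ᶜ, A i l :=
      sum_congr rfl fun i hi => if_neg (by simpa using hi)
    have hl := hmove l
    rw [← hcol l, Fintype.sum_eq_add_sum_compl i₀] at hl
    rw [Fintype.sum_eq_add_sum_compl i₀, hrest]
    simp only [B, if_true, Equiv.swap_apply_def]
    split_ifs at hl ⊢ <;> subst_vars <;> omega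

theorem Realizable.sum_le (h : Realizable r c) (T : Finset κ) :
    ∑ j ∈ T, c j ≤ ∑ i, min #T (r i) := by
  obtain ⟨A, h01, hrow, hcol⟩ := h
  simp_rw [← hcol]
  rw [sum_comm]
  refine sum_le_sum fun i _ => le_min ?_ ?_
  · exact (sum_le_card_nsmul T _ 1 fun j _ => by rcases h01 i j with h | h <;> simp [h]).trans
      (by simp)
  · exact (sum_le_sum_of_subset (subset_univ T)).trans (hrow i).le

theorem Realizable.sum_eq (h : Realizable r c) : ∑ j, c j = ∑ i, r i := by
  obtain ⟨A, -, hrow, hcol⟩ := h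
  simp_rw [← hcol]
  rw [sum_comm]
  exact sum_congr rfl fun i _ => hrow i

end Realizable

section Majorization

variable {n : ℕ} {c d : Fin n → ℕ}

def prefixSum (c : Fin n → ℕ) (k : ℕ) : ℕ := ∑ j ∈ univ.filter (fun j : Fin n => j.1 < k), c j

def MajorizedBy (c d : Fin n → ℕ) : Prop :=
  (∀ k : ℕ, 1 ≤ k → k ≤ n → prefixSum c k ≤ prefixSum d k) ∧ ∑ j, c j = ∑ j, d j

theorem prefixSum_zero (c : Fin n → ℕ) : prefixSum c 0 = 0 := by simp [prefixSum]

theorem prefixSum_succ (c : Fin n → ℕ) (j : Fin n) :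
    prefixSum c ((j : ℕ) + 1) = prefixSum c j + c j := by
  have : univ.filter (fun l : Fin n => l.1 < j + 1) =
      insert j (univ.filter (fun l : Fin n => l.1 < j)) := by
    ext l
    simp only [mem_filter, mem_univ, true_and, mem_insert, Fin.ext_iff]
    omega
  rw [prefixSum, prefixSum, this, sum_insert (by simp), add_comm]

theorem prefixSum_of_le (c : Fin n → ℕ) {k : ℕ} (hk : n ≤ k) : prefixSum c k = ∑ j, c j := by
  rw [prefixSum, filter_true_of_mem fun j _ => j.2.trans_le hk]

theorem eq_of_prefixSum_eq (h : ∀ k, prefixSum c k = prefixSum d k) : c = d := by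
  funext j
  have := h (j + 1)
  rw [prefixSum_succ, prefixSum_succ, h j] at this
  omega

theorem MajorizedBy.prefixSum_le (h : MajorizedBy c d) (k : ℕ) :
    prefixSum c k ≤ prefixSum d k := by
  rcases Nat.eq_zero_or_pos k with rfl | hk
  · simp [prefixSum_zero]
  rcases le_or_gt k n with hkn | hkn
  · exact h.1 k hk hkn
  · rw [prefixSum_of_le c hkn.le, prefixSum_of_le d hkn.le, h.2]

theorem MajorizedBy.prefixSum_eq_of_le (h : MajorizedBy c d) {k : ℕ} (hk : n ≤ k) :
    prefixSum c k = prefixSum d k := by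
  rw [prefixSum_of_le c hk, prefixSum_of_le d hk, h.2]

theorem lt_of_prefixSum_eq_of_lt (hd : Antitone d) {j : Fin n}
    (heq : ∀ l ≤ (j : ℕ), prefixSum c l = prefixSum d l)
    (hlt : prefixSum c ((j : ℕ) + 1) < prefixSum d ((j : ℕ) + 1)) {a : Fin n} (haj : a < j) :
    c j < c a := by
  have hca : c a = d a := by
    have := heq ((a : ℕ) + 1) haj
    rw [prefixSum_succ, prefixSum_succ, heq a haj.le] at this
    omega
  have hcj : c j < d j := by
    rw [prefixSum_succ, prefixSum_succ, heq j le_rfl] at hlt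
    omega
  exact hcj.trans_le (hca ▸ hd haj.le)

theorem MajorizedBy.lt_of_lt_of_prefixSum_eq (hd : Antitone d) (hc : Antitone c)
    (h : MajorizedBy c d) {k : Fin n} (hdk : d k < c k)
    (heq : prefixSum c ((k : ℕ) + 1) = prefixSum d ((k : ℕ) + 1)) {b : Fin n} (hkb : k < b) :
    c b < c k := by
  let k' : Fin n := ⟨k + 1, by omega⟩
  have hk' : c k' < c k := by
    by_contra! hge
    have := h.prefixSum_le ((k' : ℕ) + 1)
    rw [prefixSum_succ c k', prefixSum_succ d k', show (k' : ℕ) = k + 1 from rfl, heq] at this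
    have := hd (show k ≤ k' from Nat.le_succ _)
    omega
  exact (hc (show k' ≤ b from hkb)).trans_lt hk'

theorem MajorizedBy.exists_first_lt (h : MajorizedBy c d) (hne : c ≠ d) :
    ∃ j : Fin n, (∀ l ≤ (j : ℕ), prefixSum c l = prefixSum d l) ∧
      prefixSum c ((j : ℕ) + 1) < prefixSum d ((j : ℕ) + 1) := by
  have hex : ∃ l, prefixSum c l < prefixSum d l := by
    by_contra! hle
    exact hne (eq_of_prefixSum_eq fun l => (h.prefixSum_le l).antisymm (hle l))
  have hlt := Nat.find_spec hex
  have hfind_lt : Nat.find hex < n := by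
    by_contra! hge
    exact hlt.ne (h.prefixSum_eq_of_le hge)
  have hfind_pos : 0 < Nat.find hex := by
    by_contra! h0
    rw [Nat.le_zero.1 h0, prefixSum_zero, prefixSum_zero] at hlt
    exact lt_irrefl 0 hlt
  refine ⟨⟨Nat.find hex - 1, by omega⟩, fun l hl => ?_, by simpa [Nat.sub_add_cancel hfind_pos]⟩
  exact (h.prefixSum_le l).antisymm (not_lt.1 (Nat.find_min hex (by simp only at hl; omega)))

theorem MajorizedBy.exists_transfer_indices (hd : Antitone d) (hc : Antitone c)
    (h : MajorizedBy c d) (hne : c ≠ d) :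
    ∃ j k : Fin n, j < k ∧ 0 < c k ∧ (∀ a < j, c j < c a) ∧ (∀ b, k < b → c b < c k) ∧
      ∀ l : ℕ, j < l → l ≤ k → prefixSum c l < prefixSum d l := by
  obtain ⟨j, hbefore, hj⟩ := h.exists_first_lt hne
  have hjn : (j : ℕ) + 1 < n := by
    by_contra! hge
    exact hj.ne (h.prefixSum_eq_of_le hge)
  -- the first prefix length after `j + 1` at which `c` catches up with `d` again
  have hex : ∃ l, (j : ℕ) + 1 < l ∧ prefixSum c l = prefixSum d l :=
    ⟨n, hjn, h.prefixSum_eq_of_le le_rfl⟩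
  obtain ⟨hlt, heq⟩ := Nat.find_spec hex
  have hfind_le : Nat.find hex ≤ n := Nat.find_min' hex ⟨hjn, h.prefixSum_eq_of_le le_rfl⟩
  have hmid : ∀ l, (j : ℕ) + 1 ≤ l → l < Nat.find hex → prefixSum c l < prefixSum d l := by
    intro l hl₁ hl₂
    rcases hl₁.eq_or_lt with rfl | hl₁
    · exact hj
    · exact (h.prefixSum_le l).lt_of_ne fun he => Nat.find_min hex hl₂ ⟨hl₁, he⟩
  obtain ⟨k, hk⟩ : ∃ k : Fin n, (k : ℕ) + 1 = Nat.find hex :=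
    ⟨⟨Nat.find hex - 1, by omega⟩, by simp only; omega⟩
  have hdk : d k < c k := by
    have := hmid k (by omega) (by omega)
    rw [← hk, prefixSum_succ, prefixSum_succ] at heq
    omega
  exact ⟨j, k, Fin.lt_def.2 (by omega), (Nat.zero_le _).trans_lt hdk,
    fun a ha => lt_of_prefixSum_eq_of_lt hd hbefore hj ha,
    fun b hb => h.lt_of_lt_of_prefixSum_eq hd hc hdk (hk ▸ heq) hb,
    fun l hl₁ hl₂ => hmid l (by omega) (by omega)⟩

theorem MovesUnit.majorizedBy {c' : Fin n → ℕ} {j k : Fin n} (hmove : MovesUnit c c' k j)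
    (hjk : j < k) (h : MajorizedBy c d)
    (hlt : ∀ l : ℕ, j < l → l ≤ k → prefixSum c l < prefixSum d l) : MajorizedBy c' d := by
  refine ⟨fun l _ _ => ?_, ?_⟩
  · have hl := hmove.sum_mul_add 1 (univ.filter fun i : Fin n => i.1 < l)
    simp only [Pi.one_apply, one_mul, mem_filter, mem_univ, true_and] at hl
    change prefixSum c' l + _ = prefixSum c l + _ at hl
    have := h.prefixSum_le l
    have := hlt l
    have : (j : ℕ) < k := hjk
    split_ifs at hl <;> omega
  · have htot := hmove.sum_mul_add 1 univ
    simp only [Pi.one_apply, one_mul, mem_univ, if_true] at htot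
    rw [← h.2]
    omega

theorem MajorizedBy.exists_movesUnit (hd : Antitone d) (hc : Antitone c) (h : MajorizedBy c d)
    (hne : c ≠ d) :
    ∃ (c' : Fin n → ℕ) (j k : Fin n),
      j < k ∧ MovesUnit c c' k j ∧ Antitone c' ∧ MajorizedBy c' d := by
  obtain ⟨j, k, hjk, hk₀, hj, hk, hlt⟩ := h.exists_transfer_indices hd hc hne
  let c' : Fin n → ℕ := fun l => c l + (if l = j then 1 else 0) - (if l = k then 1 else 0)
  have hmove : MovesUnit c c' k j := by
    intro l
    simp only [c']
    split_ifs <;> subst_vars <;> omega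
  exact ⟨c', j, k, hjk, hmove, hmove.antitone hc hjk hj hk, hmove.majorizedBy hjk h hlt⟩

end Majorization

section Conjugate

variable {ι : Type*} [Fintype ι] {n : ℕ} {r : ι → ℕ}

def conjugate (n : ℕ) (r : ι → ℕ) : Fin n → ℕ :=
  fun j => #{i | j.1 < r i}

theorem antitone_conjugate (n : ℕ) (r : ι → ℕ) : Antitone (conjugate n r) :=
  fun _ _ hjk => card_le_card fun _ => by
    simp only [mem_filter, mem_univ, true_and]
    exact lt_of_le_of_lt hjk

theorem prefixSum_conjugate (hr : ∀ i, r i ≤ n) (k : ℕ) :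
    prefixSum (conjugate n r) k = ∑ i, min k (r i) := by
  simp only [prefixSum, conjugate, card_filter]
  rw [sum_comm]
  refine sum_congr rfl fun i _ => ?_
  rw [← card_filter, filter_filter]
  simp only [← lt_min_iff, Fin.card_filter_val_lt]
  have := hr i
  omega

theorem realizable_conjugate (hr : ∀ i, r i ≤ n) : Realizable r (conjugate n r) :=
  ⟨fun i j => if j.1 < r i then 1 else 0, fun i j => by by_cases h : j.1 < r i <;> simp [h],
    fun i => by simp [sum_boole, Fin.card_filter_val_lt, hr i],
    fun j => by simp [conjugate, sum_boole]⟩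

theorem Realizable.majorizedBy (hr : ∀ i, r i ≤ n) {c : Fin n → ℕ} (h : Realizable r c) :
    MajorizedBy c (conjugate n r) := by
  refine ⟨fun k _ _ => ?_, ?_⟩
  · calc prefixSum c k ≤ ∑ i, min #{j : Fin n | j.1 < k} (r i) := h.sum_le _
      _ ≤ ∑ i, min k (r i) := by
        gcongr
        rw [Fin.card_filter_val_lt]
        exact min_le_right _ _
      _ = prefixSum (conjugate n r) k := (prefixSum_conjugate hr k).symm
  · rw [h.sum_eq, ← prefixSum_of_le _ le_rfl, prefixSum_conjugate hr]
    exact sum_congr rfl fun i _ => (min_eq_right (hr i)).symm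

theorem Realizable.of_majorizedBy (hr : ∀ i, r i ≤ n) {c : Fin n → ℕ}
    (hc : Antitone c) (h : MajorizedBy c (conjugate n r)) : Realizable r c := by
  induction hM : ∑ l : Fin n, (l : ℕ) * c l using Nat.strong_induction_on generalizing c with
  | _ M ih =>
  by_cases hcd : c = conjugate n r
  · exact hcd ▸ realizable_conjugate hr
  obtain ⟨c', j, k, hjk, hmove, hc', hc'd⟩ := h.exists_movesUnit (antitone_conjugate n r) hc hcd
  have hmoment := hmove.sum_mul_add (fun l => (l : ℕ)) univ
  have hj := hmove j
  have hk := hmove k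
  have := hc hjk.le
  simp only [mem_univ, hjk.ne, hjk.ne', ↓reduceIte] at hmoment hj hk
  have hjk' : (j : ℕ) < k := hjk
  exact (ih _ (by omega) hc' hc'd rfl).of_movesUnit (by omega) hmove.symm

end Conjugate

theorem exists_perm_antitone_comp {n : ℕ} (s : Fin n → ℕ) :
    ∃ σ : Equiv.Perm (Fin n), Antitone (s ∘ σ) :=
  ⟨Fin.revPerm.trans (Tuple.sort s), fun _ _ hab =>
    Tuple.monotone_sort s (Fin.rev_le_rev.2 hab)⟩

theorem exists_isLeast_of_eq {S T : Set ℤ} (hST : S = T) (hS : S.Nonempty) (hT : T.Finite) :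
    ∃ v, IsLeast S v ∧ IsLeast T v := by
  subst hST
  obtain ⟨v, hv, hlt⟩ := Set.exists_min_image S id hT hS
  exact ⟨v, ⟨hv, hlt⟩, ⟨hv, hlt⟩⟩

end GaleRyser

theorem columnSumOptimization_same_function_general (m n : ℕ)
    (r : Fin m → ℕ) (hr : ∀ i, r i ≤ n)
    (d : Fin n → ℕ)
    (hd : ∀ j : Fin n, d j = (univ.filter (fun i : Fin m => j.1 + 1 ≤ r i)).card)
    (f : ℕ → ℤ) :
    ∃ v : ℤ,
      IsLeast {w : ℤ | ∃ A : Fin m → Fin n → ℕ,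
          (∀ i j, A i j = 0 ∨ A i j = 1) ∧ (∀ i, ∑ j, A i j = r i) ∧
          w = ∑ j, f (∑ i, A i j)} v ∧
      IsLeast {w : ℤ | ∃ c : Fin n → ℕ, Antitone c ∧
          (∀ k : ℕ, 1 ≤ k → k ≤ n →
            ∑ j ∈ univ.filter (fun j : Fin n => j.1 < k), c j ≤
              ∑ j ∈ univ.filter (fun j : Fin n => j.1 < k), d j) ∧
          ∑ j, c j = ∑ j, d j ∧
          w = ∑ j, f (c j)} v := by
  obtain rfl : d = GaleRyser.conjugate n r := funext hd
  refine GaleRyser.exists_isLeast_of_eq (Set.ext fun w => ⟨?_, ?_⟩) ?_ ?_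
  · rintro ⟨A, h01, hrow, rfl⟩
    obtain ⟨σ, hσ⟩ := GaleRyser.exists_perm_antitone_comp fun j => ∑ i, A i j
    have hA : GaleRyser.Realizable r fun j => ∑ i, A i j := ⟨A, h01, hrow, fun _ => rfl⟩
    obtain ⟨hpre, htot⟩ := (hA.comp_equiv σ).majorizedBy hr
    exact ⟨_, hσ, hpre, htot, (Equiv.sum_comp σ fun j => f (∑ i, A i j)).symm⟩
  · rintro ⟨c, hc, hpre, htot, rfl⟩
    obtain ⟨A, h01, hrow, hcol⟩ := GaleRyser.Realizable.of_majorizedBy hr hc ⟨hpre, htot⟩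
    exact ⟨A, h01, hrow, by simp only [hcol]⟩
  · obtain ⟨A, h01, hrow, -⟩ := GaleRyser.realizable_conjugate (n := n) hr
    exact ⟨_, A, h01, hrow, rfl⟩
  · refine ((Set.finite_Icc 0 fun _ => ∑ j, GaleRyser.conjugate n r j).image
      fun c : Fin n → ℕ => ∑ j, f (c j)).subset ?_
    rintro w ⟨c, -, -, htot, rfl⟩
    refine ⟨c, ⟨fun _ => Nat.zero_le _, fun j => ?_⟩, rfl⟩
    exact htot ▸ single_le_sum (fun _ _ => Nat.zero_le _) (mem_univ j)

/-- For a single function `f`, the minimum of `∑ⱼ f(cⱼ(A))` over (0,1)-matrices `A`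
with row sums `r` equals the minimum of `∑ⱼ f(cⱼ)` over nonincreasing tuples `c`
majorized by the conjugate tuple `d`; both minima are attained and equal. -/
theorem columnSumOptimization_same_function (m n : ℕ) (hm : 0 < m) (hn : 0 < n)
    (r : Fin m → ℕ) (hr : ∀ i, r i ≤ n)
    (d : Fin n → ℕ)
    (hd : ∀ j : Fin n, d j = (univ.filter (fun i : Fin m => j.1 + 1 ≤ r i)).card)
    (f : ℕ → ℤ) :
    ∃ v : ℤ,
      IsLeast {w : ℤ | ∃ A : Fin m → Fin n → ℕ,
          (∀ i j, A i j = 0 ∨ A i j = 1) ∧ (∀ i, ∑ j, A i j = r i) ∧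
          w = ∑ j, f (∑ i, A i j)} v ∧
      IsLeast {w : ℤ | ∃ c : Fin n → ℕ, Antitone c ∧
          (∀ k : ℕ, 1 ≤ k → k ≤ n →
            ∑ j ∈ univ.filter (fun j : Fin n => j.1 < k), c j ≤
              ∑ j ∈ univ.filter (fun j : Fin n => j.1 < k), d j) ∧
          ∑ j, c j = ∑ j, d j ∧
          w = ∑ j, f (c j)} v :=
  columnSumOptimization_same_function_general m n r hr d hd f
end

section
/- Let m, n be positive integers, let r = (r_1, …, r_m) be integers with 0 ≤ r_i ≤ n for all i, let d = (d_1, …, d_n) be the conjugate tuple of r, and let f_1, …, f_n : {0,1,…,m} → ℤ be arbitrary functions. Then the minimum of ∑_{j=1}^n f_j(c_j(A)) over all matrices A ∈ {0,1}^{m×n} with row sums r_i(A) = r_i for all i equals the minimum of ∑_{j=1}^n f_j(c_j) over all tuples c = (c_1, …, c_n) of nonnegative integers whose nonincreasing rearrangement is majorized by d; in particular, both feasible sets are nonempty and both minima are attained. -/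
/-!
The column-sum vectors of `0/1` matrices with row sums `r` are exactly the tuples whose
nonincreasing rearrangement is majorized by the conjugate `d` (Gale–Ryser), so both minima are
taken over the same finite nonempty set of values.

Necessity: the first `k` columns of row `i` hold at most `min (r i) k` ones, and the staircase
matrix attains these bounds, with column sums `d`. Sufficiency: if an antitone `c ≺ d` differs
from `d`, let `J` be the first index where the prefix sums of `c` fall behind those of `d` and
`K` the first one after which they catch up again. Moving one unit of `c` from `K` to `J` keeps
the tuple antitone and majorized by `d`, and strictly decreases `∑ₖ (Dₖ - Cₖ)`; by induction
the new tuple is realized, and swapping a `1` in column `J` with a `0` in column `K` within one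
row moves the unit back.
-/

open Finset

namespace ColumnSums

variable {m n : ℕ}

def prefixSum (g : Fin n → ℕ) (k : ℕ) : ℕ :=
  ∑ j ∈ univ.filter (fun j : Fin n => j.1 < k), g j

lemma prefixSum_zero (g : Fin n → ℕ) : prefixSum g 0 = 0 := by
  simp [prefixSum]

lemma prefixSum_succ (g : Fin n → ℕ) {t : ℕ} (ht : t < n) :
    prefixSum g (t + 1) = prefixSum g t + g ⟨t, ht⟩ := by
  have h : univ.filter (fun j : Fin n => j.1 < t + 1)
      = insert ⟨t, ht⟩ (univ.filter (fun j : Fin n => j.1 < t)) := by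
    ext j; simp [Fin.ext_iff]; omega
  rw [prefixSum, prefixSum, h, sum_insert (by simp), add_comm]

lemma prefixSum_of_le (g : Fin n → ℕ) {k : ℕ} (hk : n ≤ k) : prefixSum g k = ∑ j, g j := by
  rw [prefixSum, filter_true_of_mem fun j _ => j.2.trans_le hk]

lemma prefixSum_add (g h : Fin n → ℕ) (k : ℕ) :
    prefixSum (g + h) k = prefixSum g k + prefixSum h k :=
  sum_add_distrib

lemma prefixSum_single (J : Fin n) (k : ℕ) :
    prefixSum (Pi.single J 1) k = if J.1 < k then 1 else 0 := by
  simp [prefixSum, sum_pi_single']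

lemma eq_of_prefixSum_eq {c d : Fin n → ℕ} (h : ∀ k, prefixSum c k = prefixSum d k) : c = d := by
  funext ⟨j, hj⟩
  have := h j
  have := h (j + 1)
  rw [prefixSum_succ c hj, prefixSum_succ d hj] at this
  omega

def Majorizes (d c : Fin n → ℕ) : Prop :=
  (∀ k, 1 ≤ k → k ≤ n → prefixSum c k ≤ prefixSum d k) ∧ ∑ j, c j = ∑ j, d j

lemma Majorizes.prefixSum_le {c d : Fin n → ℕ} (h : Majorizes d c) (k : ℕ) :
    prefixSum c k ≤ prefixSum d k := by
  rcases Nat.eq_zero_or_pos k with rfl | hk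
  · simp [prefixSum_zero]
  rcases le_or_gt k n with hkn | hnk
  · exact h.1 k hk hkn
  · rw [prefixSum_of_le c hnk.le, prefixSum_of_le d hnk.le, h.2]

def transfer (c : Fin n → ℕ) (J K : Fin n) : Fin n → ℕ :=
  c + Pi.single J 1 - Pi.single K 1

section transfer

variable {c d : Fin n → ℕ} {J K : Fin n}

lemma transfer_add_single (hJK : J ≠ K) (hK : 0 < c K) :
    transfer c J K + Pi.single K 1 = c + Pi.single J 1 := by
  funext j
  simp only [transfer, Pi.add_apply, Pi.sub_apply, Pi.single_apply]
  split_ifs <;> subst_vars <;> omega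

lemma prefixSum_transfer (hJK : J ≠ K) (hK : 0 < c K) (k : ℕ) :
    prefixSum (transfer c J K) k + (if K.1 < k then 1 else 0) =
      prefixSum c k + if J.1 < k then 1 else 0 := by
  simpa only [prefixSum_add, prefixSum_single] using
    congrArg (prefixSum · k) (transfer_add_single hJK hK)

lemma antitone_transfer (hc : Antitone c) (hJK : J < K) (hJ : ∀ j < J, c J < c j)
    (hK : ∀ j, K < j → c j < c K) : Antitone (transfer c J K) := by
  intro x y hxy
  have hxy' := hc hxy
  simp only [transfer, Pi.add_apply, Pi.sub_apply, Pi.single_apply]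
  split_ifs <;> subst_vars
  all_goals first
    | omega
    | (have := hJ x (by order); omega)
    | (have := hK y (by order); omega)

lemma majorizes_transfer (hcd : Majorizes d c) (hJK : J < K) (hK : 0 < c K)
    (hgap : ∀ k, J.1 < k → k ≤ K.1 → prefixSum c k < prefixSum d k) :
    Majorizes d (transfer c J K) := by
  refine ⟨fun k _ _ => ?_, ?_⟩
  · have h := prefixSum_transfer hJK.ne hK k
    have := hcd.prefixSum_le k
    by_cases hJk : J.1 < k
    · by_cases hKk : K.1 < k
      · simp only [hJk, hKk, if_true] at h
        omega
      · have := hgap k hJk (by omega)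
        simp only [hJk, hKk, if_true, if_false] at h
        omega
    · simp only [hJk, show ¬K.1 < k by omega, if_false] at h
      omega
  · have h := prefixSum_transfer hJK.ne hK n
    simp only [J.2, K.2, if_true, prefixSum_of_le _ le_rfl] at h
    rw [← hcd.2]; omega

def deficit (d c : Fin n → ℕ) : ℕ :=
  ∑ k ∈ range n, (prefixSum d k - prefixSum c k)

lemma deficit_transfer_lt (hJK : J < K) (hK : 0 < c K)
    (hgap : ∀ k, J.1 < k → k ≤ K.1 → prefixSum c k < prefixSum d k) :
    deficit d (transfer c J K) < deficit d c := by
  have h := prefixSum_transfer hJK.ne hK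
  refine sum_lt_sum (fun k _ => ?_) ⟨K.1, mem_range.2 K.2, ?_⟩
  · have := h k
    split_ifs at this <;> omega
  · have := h K.1
    rw [if_neg (lt_irrefl _), if_pos (show J.1 < K.1 from hJK)] at this
    have := hgap K hJK le_rfl
    omega

end transfer

section pair

variable {c d : Fin n → ℕ}

lemma exists_deficit_start (hcd : Majorizes d c) (hne : c ≠ d) :
    ∃ a, a + 1 < n ∧ prefixSum c (a + 1) < prefixSum d (a + 1) ∧
      ∀ k ≤ a, prefixSum c k = prefixSum d k := by
  have hex : ∃ k, prefixSum c k < prefixSum d k := by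
    by_contra! h
    exact hne (eq_of_prefixSum_eq fun k => (hcd.prefixSum_le k).antisymm (h k))
  have hmin (k) (hk : k < Nat.find hex) : prefixSum c k = prefixSum d k :=
    (hcd.prefixSum_le k).antisymm (not_lt.1 (Nat.find_min hex hk))
  obtain ⟨a, ha⟩ : ∃ a, Nat.find hex = a + 1 := by
    refine Nat.exists_eq_succ_of_ne_zero fun h0 => ?_
    have := Nat.find_spec hex
    simp [h0, prefixSum_zero] at this
  refine ⟨a, ?_, ha ▸ Nat.find_spec hex, fun k hk => hmin k (by omega)⟩
  by_contra! hn
  have := Nat.find_spec hex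
  rw [prefixSum_of_le c (by omega), prefixSum_of_le d (by omega), hcd.2] at this
  exact lt_irrefl _ this

lemma exists_deficit_end (hcd : Majorizes d c) {a : ℕ} (han : a < n)
    (ha : prefixSum c a < prefixSum d a) :
    ∃ b, a ≤ b ∧ b < n ∧ prefixSum c (b + 1) = prefixSum d (b + 1) ∧
      ∀ k, a ≤ k → k ≤ b → prefixSum c k < prefixSum d k := by
  have hlast : a ≤ n - 1 ∧ prefixSum c (n - 1 + 1) = prefixSum d (n - 1 + 1) :=
    ⟨by omega, by rw [prefixSum_of_le c (by omega), prefixSum_of_le d (by omega), hcd.2]⟩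
  have hex : ∃ t, a ≤ t ∧ prefixSum c (t + 1) = prefixSum d (t + 1) := ⟨n - 1, hlast⟩
  obtain ⟨hab, hb⟩ := Nat.find_spec hex
  refine ⟨Nat.find hex, hab, by have := Nat.find_min' hex hlast; omega, hb, fun k hak hkb => ?_⟩
  rcases hak.eq_or_lt with rfl | hak
  · exact ha
  have := Nat.find_min hex (show k - 1 < Nat.find hex by omega)
  rw [Nat.sub_add_cancel (by omega : 1 ≤ k)] at this
  exact (hcd.prefixSum_le k).lt_of_ne fun h => this ⟨by omega, h⟩

lemma exists_transfer_pair (hc : Antitone c) (hd : Antitone d) (hcd : Majorizes d c)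
    (hne : c ≠ d) :
    ∃ J K : Fin n, J < K ∧ 0 < c K ∧ (∀ j < J, c J < c j) ∧ (∀ j, K < j → c j < c K) ∧
      ∀ k, J.1 < k → k ≤ K.1 → prefixSum c k < prefixSum d k := by
  obtain ⟨a, han, ha, hbefore⟩ := exists_deficit_start hcd hne
  obtain ⟨b, hab, hbn, hb, hgap⟩ := exists_deficit_end hcd han ha
  have hJ : a < n := by omega
  have hcJ : c ⟨a, hJ⟩ < d ⟨a, hJ⟩ := by
    have := prefixSum_succ c hJ
    have := prefixSum_succ d hJ
    have := hbefore a le_rfl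
    omega
  have hcK : d ⟨b, hbn⟩ < c ⟨b, hbn⟩ := by
    have := prefixSum_succ c hbn
    have := prefixSum_succ d hbn
    have := hgap b hab le_rfl
    omega
  refine ⟨⟨a, hJ⟩, ⟨b, hbn⟩, Fin.mk_lt_mk.2 hab, by omega, fun ⟨j, hj⟩ hja => ?_,
    fun ⟨j, hj⟩ hbj => ?_, hgap⟩
  · have hja' : j < a := hja
    have := prefixSum_succ c hj
    have := prefixSum_succ d hj
    have := hbefore j hja'.le
    have := hbefore (j + 1) hja'
    have := hd hja.le
    omega
  · have hbj' : b < j := hbj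
    have hb1 : b + 1 < n := by omega
    have := prefixSum_succ c hb1
    have := prefixSum_succ d hb1
    have := hcd.prefixSum_le (b + 1 + 1)
    have := hd (Fin.mk_le_mk.2 (Nat.le_succ b) : (⟨b, hbn⟩ : Fin n) ≤ ⟨b + 1, hb1⟩)
    have := hc (Fin.mk_le_mk.2 hbj' : (⟨b + 1, hb1⟩ : Fin n) ≤ ⟨j, hj⟩)
    omega

end pair

def Realizable (r : Fin m → ℕ) (c : Fin n → ℕ) : Prop :=
  ∃ A : Fin m → Fin n → ℕ, (∀ i j, A i j = 0 ∨ A i j = 1) ∧ (∀ i, ∑ j, A i j = r i) ∧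
    (fun j => ∑ i, A i j) = c

section matrix

variable {r : Fin m → ℕ} {c : Fin n → ℕ}

lemma exists_swap_ones {A : Fin m → Fin n → ℕ} (hA : ∀ i j, A i j = 0 ∨ A i j = 1) {J K : Fin n}
    (hlt : ∑ i, A i K < ∑ i, A i J) :
    ∃ B : Fin m → Fin n → ℕ, (∀ i j, B i j = 0 ∨ B i j = 1) ∧
      (∀ i, ∑ j, B i j = ∑ j, A i j) ∧
      (fun j => ∑ i, B i j) + Pi.single J 1 = (fun j => ∑ i, A i j) + Pi.single K 1 := by
  obtain ⟨i₀, hJ, hK⟩ : ∃ i, A i J = 1 ∧ A i K = 0 := by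
    by_contra! h
    refine hlt.not_ge (sum_le_sum fun i _ => ?_)
    rcases hA i J with h' | h' <;> rcases hA i K with h'' | h'' <;> simp_all
  have hJK : J ≠ K := by rintro rfl; exact lt_irrefl _ hlt
  obtain ⟨B, hBi₀, hB⟩ : ∃ B : Fin m → Fin n → ℕ,
      B i₀ = A i₀ ∘ Equiv.swap J K ∧ ∀ i ≠ i₀, B i = A i :=
    ⟨Function.update A i₀ _, Function.update_self .., fun i hi => Function.update_of_ne hi ..⟩
  have hcol (j : Fin n) : ∑ i, B i j + A i₀ j = ∑ i, A i j + A i₀ (Equiv.swap J K j) := by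
    rw [← add_sum_erase _ _ (mem_univ i₀), ← add_sum_erase _ _ (mem_univ i₀),
      sum_congr rfl fun i hi => congrFun (hB i (ne_of_mem_erase hi)) j, hBi₀]
    simp only [Function.comp_apply]
    ring
  refine ⟨B, fun i j => ?_, fun i => ?_, funext fun j => ?_⟩
  · rcases eq_or_ne i i₀ with rfl | hi
    · simpa [hBi₀] using hA i (Equiv.swap J K j)
    · simpa [hB i hi] using hA i j
  · rcases eq_or_ne i i₀ with rfl | hi
    · simpa [hBi₀] using Equiv.sum_comp (Equiv.swap J K) (A i)
    · simp [hB i hi]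
  · have := hcol j
    simp only [Pi.add_apply, Pi.single_apply]
    rcases eq_or_ne j J with rfl | hjJ
    · rw [Equiv.swap_apply_left, hJ, hK] at this
      simp [hJK]
      omega
    rcases eq_or_ne j K with rfl | hjK
    · rw [Equiv.swap_apply_right, hJ, hK] at this
      simp [hjJ]
      omega
    · rw [Equiv.swap_apply_of_ne_of_ne hjJ hjK] at this
      simpa [hjJ, hjK] using this

lemma Realizable.of_transfer {J K : Fin n} (h : Realizable r (transfer c J K)) (hJK : J ≠ K)
    (hK : 0 < c K) (hKJ : c K ≤ c J) : Realizable r c := by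
  obtain ⟨A, hA, hrow, hcol⟩ := h
  have hlt : ∑ i, A i K < ∑ i, A i J := by
    have h := congrArg (· J) (transfer_add_single hJK hK)
    have h' := congrArg (· K) (transfer_add_single hJK hK)
    simp only [← hcol, Pi.add_apply, Pi.single_eq_same, Pi.single_eq_of_ne hJK,
      Pi.single_eq_of_ne hJK.symm] at h h'
    omega
  obtain ⟨B, hB, hBrow, hBcol⟩ := exists_swap_ones hA hlt
  refine ⟨B, hB, fun i => (hBrow i).trans (hrow i), add_right_cancel (b := Pi.single J 1) ?_⟩
  rw [hBcol, hcol, transfer_add_single hJK hK]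

lemma Realizable.comp_perm (h : Realizable r c) (σ : Equiv.Perm (Fin n)) :
    Realizable r (c ∘ σ) := by
  obtain ⟨A, hA, hrow, rfl⟩ := h
  exact ⟨fun i j => A i (σ j), fun i j => hA i (σ j),
    fun i => (Equiv.sum_comp σ (A i)).trans (hrow i), rfl⟩

lemma Realizable.apply_le (h : Realizable r c) (j : Fin n) : c j ≤ m := by
  obtain ⟨A, hA, -, rfl⟩ := h
  simpa using sum_le_sum fun i (_ : i ∈ univ) =>
    show A i j ≤ 1 by rcases hA i j with h | h <;> simp [h]

lemma Realizable.sum_eq (h : Realizable r c) : ∑ j, c j = ∑ i, r i := by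
  obtain ⟨A, -, hrow, rfl⟩ := h
  rw [sum_comm]
  exact sum_congr rfl fun i _ => hrow i

end matrix

theorem realizable_of_majorizes {r : Fin m → ℕ} {d : Fin n → ℕ} (hd : Antitone d)
    (hdr : Realizable r d) {c : Fin n → ℕ} (hc : Antitone c) (hcd : Majorizes d c) :
    Realizable r c := by
  induction hN : deficit d c using Nat.strong_induction_on generalizing c with
  | _ N ih =>
  by_cases hne : c = d
  · exact hne ▸ hdr
  obtain ⟨J, K, hJK, hK, hJ, hKlt, hgap⟩ := exists_transfer_pair hc hd hcd hne
  exact (ih _ (hN ▸ deficit_transfer_lt hJK hK hgap) (antitone_transfer hc hJK hJ hKlt)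
    (majorizes_transfer hcd hJK hK hgap) rfl).of_transfer hJK.ne hK (hc hJK.le)

def staircase (r : Fin m → ℕ) : Fin m → Fin n → ℕ := fun i j => if j.1 < r i then 1 else 0

lemma prefixSum_colSum (A : Fin m → Fin n → ℕ) (k : ℕ) :
    prefixSum (fun j => ∑ i, A i j) k = ∑ i, prefixSum (A i) k :=
  sum_comm

lemma prefixSum_staircase (r : Fin m → ℕ) (i : Fin m) {k : ℕ} (hk : k ≤ n) :
    prefixSum (staircase (n := n) r i) k = min (r i) k := by
  simp only [prefixSum, staircase, sum_boole, Nat.cast_id, filter_filter, ← lt_min_iff,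
    Fin.card_filter_val_lt]
  omega

section conjugate

variable {r : Fin m → ℕ} {d c : Fin n → ℕ}

lemma colSum_staircase
    (hd : ∀ j : Fin n, d j = (univ.filter (fun i : Fin m => j.1 + 1 ≤ r i)).card) :
    (fun j => ∑ i, staircase r i j) = d := by
  funext j
  simp only [staircase, sum_boole, Nat.cast_id, hd j]
  rfl

lemma realizable_conjugate (hr : ∀ i, r i ≤ n)
    (hd : ∀ j : Fin n, d j = (univ.filter (fun i : Fin m => j.1 + 1 ≤ r i)).card) :
    Realizable r d := by
  refine ⟨staircase r, fun i j => by unfold staircase; split_ifs <;> simp, fun i => ?_,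
    colSum_staircase hd⟩
  rw [← prefixSum_of_le _ le_rfl, prefixSum_staircase r i le_rfl, min_eq_left (hr i)]

lemma prefixSum_conjugate
    (hd : ∀ j : Fin n, d j = (univ.filter (fun i : Fin m => j.1 + 1 ≤ r i)).card)
    {k : ℕ} (hk : k ≤ n) : prefixSum d k = ∑ i, min (r i) k := by
  rw [← colSum_staircase hd, prefixSum_colSum]
  exact sum_congr rfl fun i _ => prefixSum_staircase r i hk

lemma antitone_conjugate
    (hd : ∀ j : Fin n, d j = (univ.filter (fun i : Fin m => j.1 + 1 ≤ r i)).card) :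
    Antitone d := by
  intro p q hpq
  rw [hd p, hd q]
  exact card_le_card (monotone_filter_right _ fun i h => by have := Fin.le_def.1 hpq; omega)

lemma Realizable.prefixSum_le (h : Realizable r c) (k : ℕ) :
    prefixSum c k ≤ ∑ i, min (r i) k := by
  obtain ⟨A, hA, hrow, rfl⟩ := h
  rw [prefixSum_colSum]
  refine sum_le_sum fun i _ => le_min ?_ ?_
  · rw [← hrow i]
    exact sum_le_sum_of_subset (filter_subset _ _)
  · calc prefixSum (A i) k ≤ ∑ j ∈ univ.filter (fun j : Fin n => j.1 < k), 1 :=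
          sum_le_sum fun j _ => by rcases hA i j with h | h <;> simp [h]
      _ ≤ k := by simp [Fin.card_filter_val_lt]

lemma Realizable.majorizes (hr : ∀ i, r i ≤ n)
    (hd : ∀ j : Fin n, d j = (univ.filter (fun i : Fin m => j.1 + 1 ≤ r i)).card)
    (h : Realizable r c) : Majorizes d c :=
  ⟨fun k _ hk => (h.prefixSum_le k).trans (prefixSum_conjugate hd hk).ge,
    h.sum_eq.trans (realizable_conjugate hr hd).sum_eq.symm⟩

theorem realizable_iff (hr : ∀ i, r i ≤ n)
    (hd : ∀ j : Fin n, d j = (univ.filter (fun i : Fin m => j.1 + 1 ≤ r i)).card) :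
    Realizable r c ↔ ∃ σ : Equiv.Perm (Fin n), Antitone (c ∘ σ) ∧ Majorizes d (c ∘ σ) := by
  constructor
  · intro h
    exact ⟨Fin.revPerm.trans (Tuple.sort c),
      (Tuple.monotone_sort c).comp_antitone fun _ _ => Fin.rev_le_rev.2,
      (h.comp_perm _).majorizes hr hd⟩
  · rintro ⟨σ, hanti, hmaj⟩
    simpa [Function.comp_assoc] using (realizable_of_majorizes (antitone_conjugate hd)
      (realizable_conjugate hr hd) hanti hmaj).comp_perm σ.symm

end conjugate

lemma finite_setOf_realizable (r : Fin m → ℕ) : {c : Fin n → ℕ | Realizable r c}.Finite :=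
  (Set.Finite.pi fun _ => Set.finite_Iic m).subset fun _ hc j _ => hc.apply_le j

end ColumnSums

open ColumnSums in
theorem columnSumOptimization_general_general (m n : ℕ)
    (r : Fin m → ℕ) (hr : ∀ i, r i ≤ n)
    (d : Fin n → ℕ)
    (hd : ∀ j : Fin n, d j = (univ.filter (fun i : Fin m => j.1 + 1 ≤ r i)).card)
    (f : Fin n → ℕ → ℤ) :
    ∃ v : ℤ,
      IsLeast {w : ℤ | ∃ A : Fin m → Fin n → ℕ,
          (∀ i j, A i j = 0 ∨ A i j = 1) ∧ (∀ i, ∑ j, A i j = r i) ∧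
          w = ∑ j, f j (∑ i, A i j)} v ∧
      IsLeast {w : ℤ | ∃ c : Fin n → ℕ, (∃ σ : Equiv.Perm (Fin n),
            Antitone (fun j => c (σ j)) ∧
            (∀ k : ℕ, 1 ≤ k → k ≤ n →
              ∑ j ∈ univ.filter (fun j : Fin n => j.1 < k), c (σ j) ≤
                ∑ j ∈ univ.filter (fun j : Fin n => j.1 < k), d j) ∧
            ∑ j, c j = ∑ j, d j) ∧
          w = ∑ j, f j (c j)} v := by
  obtain ⟨c₀, hc₀, hmin⟩ := Set.exists_min_image _ (fun c : Fin n → ℕ => ∑ j, f j (c j))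
    (finite_setOf_realizable r) ⟨d, realizable_conjugate hr hd⟩
  refine ⟨_, ⟨?_, ?_⟩, ⟨c₀, ?_, rfl⟩, ?_⟩
  · obtain ⟨A, hA, hrow, rfl⟩ := hc₀
    exact ⟨A, hA, hrow, rfl⟩
  · rintro w ⟨A, hA, hrow, rfl⟩
    exact hmin _ ⟨A, hA, hrow, rfl⟩
  · obtain ⟨σ, hanti, hprefix, htotal⟩ := (realizable_iff hr hd).1 hc₀
    exact ⟨σ, hanti, hprefix, (Equiv.sum_comp σ c₀).symm.trans htotal⟩
  · rintro w ⟨c, ⟨σ, hanti, hprefix, htotal⟩, rfl⟩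
    exact hmin c ((realizable_iff hr hd).2 ⟨σ, hanti, hprefix, (Equiv.sum_comp σ c).trans htotal⟩)

/-- For arbitrary functions `f₁,…,fₙ`, the minimum of `∑ⱼ fⱼ(cⱼ(A))` over (0,1)-matrices
`A` with row sums `r` equals the minimum of `∑ⱼ fⱼ(cⱼ)` over tuples `c` whose
nonincreasing rearrangement is majorized by the conjugate tuple `d`;
both minima are attained and equal. -/
theorem columnSumOptimization_general (m n : ℕ) (hm : 0 < m) (hn : 0 < n)
    (r : Fin m → ℕ) (hr : ∀ i, r i ≤ n)
    (d : Fin n → ℕ)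
    (hd : ∀ j : Fin n, d j = (univ.filter (fun i : Fin m => j.1 + 1 ≤ r i)).card)
    (f : Fin n → ℕ → ℤ) :
    ∃ v : ℤ,
      IsLeast {w : ℤ | ∃ A : Fin m → Fin n → ℕ,
          (∀ i j, A i j = 0 ∨ A i j = 1) ∧ (∀ i, ∑ j, A i j = r i) ∧
          w = ∑ j, f j (∑ i, A i j)} v ∧
      IsLeast {w : ℤ | ∃ c : Fin n → ℕ, (∃ σ : Equiv.Perm (Fin n),
            Antitone (fun j => c (σ j)) ∧
            (∀ k : ℕ, 1 ≤ k → k ≤ n →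
              ∑ j ∈ univ.filter (fun j : Fin n => j.1 < k), c (σ j) ≤
                ∑ j ∈ univ.filter (fun j : Fin n => j.1 < k), d j) ∧
            ∑ j, c j = ∑ j, d j) ∧
          w = ∑ j, f j (c j)} v :=
  columnSumOptimization_general_general m n r hr d hd f
end
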